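/- Let Γ be a locally semicomplete commutative weakly distance-regular digraph and let q ≥ 5 with q ∈ T. If the configuration C(q) exists (i.e. p^{(1,q-2)}_{(1,q-1),(1,q-1)} ≠ 0 and (1,q-2) is pure), then for all vertices x,y,z with ∂̃(x,y)=(1,q-1) and ∂̃(y,z)=(1,q-2), one has ∂̃(x,z)=(2,q-2) (i.e. Γ_{1,q-1}Γ_{1,q-2}={Γ_{2,q-2}}). -/

import Mathlib

variable {V : Type*}

/-- There is a directed walk of length `n` from `x` to `y` in the digraph with arc relation `A`. -/
def HasWalk (A : V → V → Prop) : ℕ → V → V → Prop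
  | 0, x, y => x = y
  | n + 1, x, y => ∃ z, A x z ∧ HasWalk A n z y

/-- The distance `∂(x,y)`: the length of a shortest directed path from `x` to `y`. -/
noncomputable def ddist (A : V → V → Prop) (x y : V) : ℕ :=
  sInf {n : ℕ | HasWalk A n x y}

/-- The two-way distance `∂̃(x,y) = (∂(x,y), ∂(y,x))`. -/
noncomputable def tdist (A : V → V → Prop) (x y : V) : ℕ × ℕ :=
  (ddist A x y, ddist A y x)

/-- The two-way distance set `∂̃(Γ)`. -/
def tset (A : V → V → Prop) : Set (ℕ × ℕ) :=
  {d : ℕ × ℕ | ∃ x y : V, tdist A x y = d}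

/-- A (finite) weakly distance-regular digraph: a loopless strongly connected digraph
together with its intersection numbers `p h i j = p^{h}_{i,j}`, where
`p h i j = 0` by convention whenever one of `h`, `i`, `j` is not a two-way distance. -/
structure WDRDigraph (V : Type*) [Fintype V] where
  Adj : V → V → Prop
  loopless : ∀ v : V, ¬ Adj v v
  strongly_connected : ∀ x y : V, ∃ n : ℕ, HasWalk Adj n x y
  p : ℕ × ℕ → ℕ × ℕ → ℕ × ℕ → ℕ
  card_inter : ∀ (i j : ℕ × ℕ) (x y : V),
    {z : V | tdist Adj x z = i ∧ tdist Adj z y = j}.ncard = p (tdist Adj x y) i j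
  p_not_in : ∀ h i j : ℕ × ℕ,
    h ∉ tset Adj ∨ i ∉ tset Adj ∨ j ∉ tset Adj → p h i j = 0

variable [Fintype V]

/-- A weakly distance-regular digraph is commutative if `p^{h}_{i,j} = p^{h}_{j,i}`
for all two-way distances `h`, `i`, `j`. -/
def WDRDigraph.Commutative (G : WDRDigraph V) : Prop :=
  ∀ h i j : ℕ × ℕ, h ∈ tset G.Adj → i ∈ tset G.Adj → j ∈ tset G.Adj →
    G.p h i j = G.p h j i

/-- A digraph is semicomplete if any two distinct vertices are joined by at least one arc. -/
def Semicomplete (A : V → V → Prop) : Prop :=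
  ∀ x y : V, x ≠ y → A x y ∨ A y x

/-- A digraph is locally semicomplete if the out-neighbourhood and the in-neighbourhood of
every vertex induce semicomplete digraphs. -/
def LocallySemicomplete (A : V → V → Prop) : Prop :=
  ∀ x y z : V, y ≠ z →
    ((A x y → A x z → (A y z ∨ A z y)) ∧ (A y x → A z x → (A y z ∨ A z y)))

/-- A circuit of length `q`, encoded as a function `ZMod q → V` each of whose
consecutive pairs (cyclically) is an arc. -/
def IsCircuit (A : V → V → Prop) (q : ℕ) (c : ZMod q → V) : Prop :=
  ∀ i : ZMod q, A (c i) (c (i + 1))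

/-- The arc `(x, y)` (of type `(1, q-1)`) is pure: every circuit of length `q`
containing it consists of arcs of type `(1, q-1)`. -/
def PureArc (A : V → V → Prop) (q : ℕ) (x y : V) : Prop :=
  ∀ c : ZMod q → V, IsCircuit A q c → c 0 = x → c 1 = y →
    ∀ i : ZMod q, tdist A (c i) (c (i + 1)) = (1, q - 1)

/-- `(1, q-1)` is pure: every arc of type `(1, q-1)` is pure. -/
def TypePure (A : V → V → Prop) (q : ℕ) : Prop :=
  ∀ x y : V, tdist A x y = (1, q - 1) → PureArc A q x y

/-- `(1, q-1)` is mixed: some arc of type `(1, q-1)` is not pure. -/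
def TypeMixed (A : V → V → Prop) (q : ℕ) : Prop :=
  ∃ x y : V, tdist A x y = (1, q - 1) ∧ ¬ PureArc A q x y

/-- The number `k_i` of vertices at two-way distance `i` from `x`
(independent of `x` in a weakly distance-regular digraph). -/
noncomputable def kval (A : V → V → Prop) (i : ℕ × ℕ) (x : V) : ℕ :=
  {y : V | tdist A x y = i}.ncard

/-!
Let `z = u₀ → u₁ → ⋯ → u_{q-2} = y` be a shortest path. Purity of `(1,q-2)` on the circuit
`y → z → u₁ → ⋯ → u_{q-3} → y` makes `(z,u₁)` an arc of type `(1,q-2)`. If `u_{q-3} ↛ x`, then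
`x → u_{q-3}`, and local semicompleteness pushes this arc back along the path to `x → u₁`; a
vertex `f` splitting `(z,u₁)` into two arcs of type `(1,q-1)` (it exists by `C(q)`) then receives
an arc from `y`, and `u₁ → ⋯ → y → f` is too short. So `u_{q-3} → x` and `∂(z,x) = q-2`.
If also `x → z`, purity on the circuit `z → u₁ → ⋯ → u_{q-3} → x → z` gives `∂̃(x,z) = (1,q-2)`,
hence `p^{(1,q-2)}_{(1,q-1),(1,q-2)} ≠ 0`. But `p^{(1,t)}_{(1,s),(1,t)} = 0` for `s ≥ 3`: the vertices
`a` with `∂̃(a,z) = (1,t)` induce a semicomplete digraph, and one of them is reached from all the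
others in at most two steps, in particular from its out-neighbour of type `(1,s)`.
-/

section Walks

variable {α : Type*} {A : α → α → Prop}

theorem hasWalk_one {x y : α} (h : A x y) : HasWalk A 1 x y := ⟨y, h, rfl⟩

theorem HasWalk.append {m n : ℕ} {x y z : α} (hxy : HasWalk A m x y) (hyz : HasWalk A n y z) :
    HasWalk A (m + n) x z := by
  induction m generalizing x with
  | zero => rw [Nat.zero_add]; exact (hxy : x = y) ▸ hyz
  | succ m ih =>
    obtain ⟨w, hxw, hwy⟩ := hxy
    rw [Nat.add_right_comm]
    exact ⟨w, hxw, ih hwy⟩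

theorem HasWalk.exists_path {n : ℕ} {x y : α} (h : HasWalk A n x y) :
    ∃ g : ℕ → α, g 0 = x ∧ g n = y ∧ ∀ i < n, A (g i) (g (i + 1)) := by
  induction n generalizing x with
  | zero => exact ⟨fun _ => x, rfl, h, fun _ hi => absurd hi (Nat.not_lt_zero _)⟩
  | succ n ih =>
    obtain ⟨w, hxw, hwy⟩ := h
    obtain ⟨g, hg0, hgn, hg⟩ := ih hwy
    refine ⟨Nat.rec x fun i _ => g i, rfl, hgn, ?_⟩
    rintro (_ | i) hi
    · exact (hg0 ▸ hxw : A x (g 0))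
    · exact hg i (by omega)

theorem hasWalk_of_path {n : ℕ} {g : ℕ → α} (hg : ∀ i < n, A (g i) (g (i + 1))) {i k : ℕ}
    (hik : i + k ≤ n) : HasWalk A k (g i) (g (i + k)) := by
  induction k generalizing i with
  | zero => rfl
  | succ k ih =>
    rw [← Nat.add_assoc, Nat.add_right_comm]
    exact ⟨g (i + 1), hg i (by omega), ih (by omega)⟩

theorem ddist_le {n : ℕ} {x y : α} (h : HasWalk A n x y) : ddist A x y ≤ n :=
  Nat.sInf_le h

theorem ddist_self (x : α) : ddist A x x = 0 :=
  Nat.le_zero.mp (ddist_le rfl)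

theorem tdist_eq_iff {x y : α} {d : ℕ × ℕ} :
    tdist A x y = d ↔ ddist A x y = d.1 ∧ ddist A y x = d.2 :=
  Prod.ext_iff

end Walks

section Semicomplete

variable {α : Type*} {A : α → α → Prop}

/-- Landau's king theorem for the reverse digraph: take a vertex of maximal in-degree. -/
theorem exists_mem_forall_adj_or_adj_adj (hirr : ∀ a, ¬ A a a) {S : Finset α}
    (hS : S.Nonempty) (hsc : ∀ a ∈ S, ∀ b ∈ S, a ≠ b → A a b ∨ A b a) :
    ∃ a ∈ S, ∀ b ∈ S, b ≠ a → A b a ∨ ∃ c ∈ S, A b c ∧ A c a := by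
  classical
  obtain ⟨a, haS, hmax⟩ := S.exists_max_image (fun a => (S.filter (A · a)).card) hS
  refine ⟨a, haS, fun b hbS hba => ?_⟩
  by_contra! hfar
  obtain ⟨hnba, hnot⟩ := hfar
  have hsub : S.filter (A · a) ⊂ S.filter (A · b) := by
    refine Finset.ssubset_iff_of_subset (fun c hc => ?_) |>.mpr ⟨a, ?_, ?_⟩
    · obtain ⟨hcS, hca⟩ := Finset.mem_filter.mp hc
      have hcb : c ≠ b := fun h => hnba (h ▸ hca)
      refine Finset.mem_filter.mpr ⟨hcS, ?_⟩
      exact (hsc c hcS b hbS hcb).resolve_right fun hbc => hnot c hcS hbc hca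
    · exact Finset.mem_filter.mpr ⟨haS, (hsc a haS b hbS hba.symm).resolve_right hnba⟩
    · exact fun h => hirr a (Finset.mem_filter.mp h).2
  exact (hmax b hbS).not_gt (Finset.card_lt_card hsub)

theorem LocallySemicomplete.adj_zero_of_adj (hls : LocallySemicomplete A) {g : ℕ → α} {x : α}
    {j : ℕ} (hg : ∀ i < j, A (g i) (g (i + 1))) (hx : ∀ i < j, g i ≠ x ∧ ¬ A (g i) x)
    (hxj : A x (g j)) : A x (g 0) := by
  induction j with
  | zero => exact hxj
  | succ j ih =>
    refine ih (fun i hi => hg i (by omega)) (fun i hi => hx i (by omega)) ?_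
    obtain ⟨hne, hnadj⟩ := hx j (by omega)
    exact ((hls (g (j + 1)) (g j) x hne).2 (hg j (by omega)) hxj).resolve_left hnadj

end Semicomplete

section Circuits

variable {α : Type*} {A : α → α → Prop}

def cycleOf (n : ℕ) (g : ℕ → α) : ZMod (n + 1) → α := fun i => g i.val

theorem isCircuit_cycleOf {n : ℕ} {g : ℕ → α} (hg : ∀ i < n, A (g i) (g (i + 1)))
    (hclose : A (g n) (g 0)) : IsCircuit A (n + 1) (cycleOf n g) := by
  intro i
  simp only [cycleOf, ZMod.val_add, ZMod.val_one_eq_one_mod, Nat.add_mod_mod]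
  rcases Nat.lt_succ_iff_lt_or_eq.mp (ZMod.val_lt i) with h | h
  · rw [Nat.mod_eq_of_lt (by omega)]
    exact hg _ h
  · rw [h, Nat.mod_self]
    exact hclose

theorem cycleOf_zero (n : ℕ) (g : ℕ → α) : cycleOf n g 0 = g 0 := by
  simp [cycleOf]

theorem cycleOf_one {n : ℕ} (hn : n ≠ 0) (g : ℕ → α) : cycleOf n g 1 = g 1 := by
  simp [cycleOf, ZMod.val_one_eq_one_mod, Nat.mod_eq_of_lt (show 1 < n + 1 by omega)]

theorem cycleOf_neg_one (n : ℕ) (g : ℕ → α) : cycleOf n g (-1) = g n :=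
  congrArg g (ZMod.val_neg_one n)

theorem PureArc.tdist_eq {q : ℕ} {c : ZMod q → α} {k : ZMod q}
    (hp : PureArc A q (c k) (c (k + 1))) (hc : IsCircuit A q c) (i : ZMod q) :
    tdist A (c i) (c (i + 1)) = (1, q - 1) := by
  have := hp (fun j => c (j + k)) (fun j => by simpa only [add_right_comm] using hc (j + k))
    (by simp) (by simp [add_comm]) (i - k)
  simpa only [sub_add_cancel, add_right_comm _ (1 : ZMod q)] using this

theorem PureArc.tdist_first_of_closing {n : ℕ} (hn : n ≠ 0) {g : ℕ → α}
    (hg : ∀ i < n, A (g i) (g (i + 1))) (hclose : A (g n) (g 0))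
    (hp : PureArc A (n + 1) (g n) (g 0)) : tdist A (g 0) (g 1) = (1, n) := by
  have hp' : PureArc A (n + 1) (cycleOf n g (-1)) (cycleOf n g (-1 + 1)) := by
    rwa [neg_add_cancel, cycleOf_neg_one, cycleOf_zero]
  simpa [cycleOf_zero, cycleOf_one hn] using hp'.tdist_eq (isCircuit_cycleOf hg hclose) 0

theorem PureArc.tdist_closing_of_first {n : ℕ} (hn : n ≠ 0) {g : ℕ → α}
    (hg : ∀ i < n, A (g i) (g (i + 1))) (hclose : A (g n) (g 0))
    (hp : PureArc A (n + 1) (g 0) (g 1)) : tdist A (g n) (g 0) = (1, n) := by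
  have hp' : PureArc A (n + 1) (cycleOf n g 0) (cycleOf n g (0 + 1)) := by
    rwa [zero_add, cycleOf_zero, cycleOf_one hn]
  simpa [neg_add_cancel, cycleOf_zero, cycleOf_neg_one] using
    hp'.tdist_eq (isCircuit_cycleOf hg hclose) (-1)

end Circuits

namespace WDRDigraph

variable (G : WDRDigraph V)

theorem hasWalk_ddist (x y : V) : HasWalk G.Adj (ddist G.Adj x y) x y :=
  Nat.sInf_mem (G.strongly_connected x y)

theorem ddist_triangle (x y z : V) : ddist G.Adj x z ≤ ddist G.Adj x y + ddist G.Adj y z :=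
  ddist_le ((G.hasWalk_ddist x y).append (G.hasWalk_ddist y z))

theorem eq_of_ddist_eq_zero {x y : V} (h : ddist G.Adj x y = 0) : x = y :=
  (h ▸ G.hasWalk_ddist x y : HasWalk G.Adj 0 x y)

theorem adj_of_ddist_eq_one {x y : V} (h : ddist G.Adj x y = 1) : G.Adj x y := by
  obtain ⟨w, hxw, rfl⟩ : HasWalk G.Adj 1 x y := h ▸ G.hasWalk_ddist x y
  exact hxw

theorem adj_of_tdist_eq {x y : V} {s : ℕ} (h : tdist G.Adj x y = (1, s)) : G.Adj x y :=
  G.adj_of_ddist_eq_one (tdist_eq_iff.mp h).1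

theorem exists_of_p_ne_zero {x y : V} {i j : ℕ × ℕ} (h : G.p (tdist G.Adj x y) i j ≠ 0) :
    ∃ w, tdist G.Adj x w = i ∧ tdist G.Adj w y = j := by
  rw [← G.card_inter] at h
  exact Set.nonempty_of_ncard_ne_zero h

theorem p_ne_zero_of_tdist_eq {x y w : V} {i j : ℕ × ℕ} (hxw : tdist G.Adj x w = i)
    (hwy : tdist G.Adj w y = j) : G.p (tdist G.Adj x y) i j ≠ 0 := by
  rw [← G.card_inter]
  have hw : w ∈ {z | tdist G.Adj x z = i ∧ tdist G.Adj z y = j} := ⟨hxw, hwy⟩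
  exact (Set.ncard_pos (Set.toFinite _) |>.mpr ⟨w, hw⟩).ne'

variable {G}

theorem p_one_eq_zero (hls : LocallySemicomplete G.Adj) {s : ℕ} (hs : 3 ≤ s) (t : ℕ) :
    G.p (1, t) (1, s) (1, t) = 0 := by
  classical
  by_contra hp
  obtain ⟨x, z, hxz⟩ : (1, t) ∈ tset G.Adj :=
    by_contra fun ht => hp (G.p_not_in _ _ _ (Or.inl ht))
  set S : Finset V := {a | tdist G.Adj a z = (1, t)} with hS
  have hmem {a : V} : a ∈ S ↔ tdist G.Adj a z = (1, t) := by simp [hS]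
  have hsc : ∀ a ∈ S, ∀ b ∈ S, a ≠ b → G.Adj a b ∨ G.Adj b a := fun a ha b hb hab =>
    (hls z a b hab).2 (G.adj_of_tdist_eq (hmem.mp ha)) (G.adj_of_tdist_eq (hmem.mp hb))
  obtain ⟨a, haS, ha⟩ := exists_mem_forall_adj_or_adj_adj G.loopless ⟨x, hmem.mpr hxz⟩ hsc
  have haz := hmem.mp haS
  obtain ⟨b, hab, hbz⟩ :=
    G.exists_of_p_ne_zero (haz ▸ hp : G.p (tdist G.Adj a z) (1, s) (1, t) ≠ 0)
  have hba : b ≠ a := by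
    rintro rfl
    simpa [ddist_self] using (tdist_eq_iff.mp hab).1
  have hreach : ddist G.Adj b a ≤ 2 := by
    rcases ha b (hmem.mpr hbz) hba with h | ⟨c, -, hbc, hca⟩
    · exact (ddist_le (hasWalk_one h)).trans (by norm_num)
    · exact ddist_le ⟨c, hbc, hasWalk_one hca⟩
  have := (tdist_eq_iff.mp hab).2
  omega

theorem adj_penultimate_of_p_ne_zero (hls : LocallySemicomplete G.Adj) {n : ℕ} (hn : 3 ≤ n)
    (hP : G.p (1, n) (1, n + 1) (1, n + 1) ≠ 0) {x y z : V} (hxy : G.Adj x y) (hyz : G.Adj y z)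
    (hzx : n ≤ ddist G.Adj z x) {u : ℕ → V} (hu0 : u 0 = z) (hun : u n = y)
    (hu : ∀ i < n, G.Adj (u i) (u (i + 1))) (hzu : tdist G.Adj z (u 1) = (1, n)) :
    G.Adj (u (n - 1)) x := by
  have hwalk (i : ℕ) (hi : i ≤ n) : HasWalk G.Adj i z (u i) := by
    simpa [hu0] using hasWalk_of_path hu (i := 0) (k := i) (by omega)
  have hne (i : ℕ) (hi : i < n) : u i ≠ x := fun h => by
    have := ddist_le (h ▸ hwalk i hi.le)
    omega
  have hnadj (i : ℕ) (hi : i < n - 1) : ¬ G.Adj (u i) x := fun h => by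
    have := ddist_le ((hwalk i (by omega)).append (hasWalk_one h))
    omega
  by_contra hux
  have hxu : G.Adj x (u (n - 1)) := by
    have huy : G.Adj (u (n - 1)) y := by
      simpa [Nat.sub_add_cancel (by omega : 1 ≤ n), hun] using hu (n - 1) (by omega)
    exact ((hls y (u (n - 1)) x (hne _ (by omega))).2 huy hxy).resolve_left hux
  have hxu1 : G.Adj x (u 1) :=
    hls.adj_zero_of_adj (g := fun i => u (i + 1)) (j := n - 2) (fun i hi => hu _ (by omega))
      (fun i hi => ⟨hne _ (by omega), hnadj _ (by omega)⟩)
      (by rwa [show n - 2 + 1 = n - 1 by omega])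
  obtain ⟨f, hzf, hfu⟩ := G.exists_of_p_ne_zero (hzu ▸ hP)
  obtain ⟨hzf1, hfz⟩ := tdist_eq_iff.mp hzf
  have hxf : G.Adj x f := by
    have hfx_ne : f ≠ x := by
      rintro rfl
      omega
    refine ((hls (u 1) f x hfx_ne).2 (G.adj_of_tdist_eq hfu) hxu1).resolve_left fun hfx => ?_
    have := ddist_le (n := 3) ⟨x, hfx, y, hxy, hasWalk_one hyz⟩
    omega
  have hyf : G.Adj y f := by
    have hyf_ne : y ≠ f := by
      rintro rfl
      have := ddist_le (hasWalk_one hyz)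
      omega
    refine ((hls x y f hyf_ne).1 hxy hxf).resolve_right fun hfy => ?_
    have := ddist_le (n := 2) ⟨y, hfy, hasWalk_one hyz⟩
    omega
  have hu1y : HasWalk G.Adj (n - 1) (u 1) y := by
    simpa [Nat.add_sub_cancel' (by omega : 1 ≤ n), hun] using
      hasWalk_of_path hu (i := 1) (k := n - 1) (by omega)
  have := ddist_le (hu1y.append (hasWalk_one hyf))
  have := (tdist_eq_iff.mp hfu).2
  omega

theorem not_adj_of_pureArc (hls : LocallySemicomplete G.Adj) {n : ℕ} (hn : 2 ≤ n) {x y z : V}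
    (hxy : tdist G.Adj x y = (1, n + 1)) (hyz : tdist G.Adj y z = (1, n)) {u : ℕ → V}
    (hu0 : u 0 = z) (hu : ∀ i < n, G.Adj (u i) (u (i + 1))) (hux : G.Adj (u (n - 1)) x)
    (hp : PureArc G.Adj (n + 1) z (u 1)) : ¬ G.Adj x z := by
  intro hxz
  -- the circuit `z → u₁ → ⋯ → u_{n-1} → x → z`
  set g := Function.update u n x with hgdef
  have hg0 : g 0 = z := by rw [hgdef, Function.update_of_ne (by omega), hu0]
  have hg1 : g 1 = u 1 := Function.update_of_ne (by omega) _ _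
  have hgn : g n = x := Function.update_self _ _ _
  have hg (i : ℕ) (hi : i < n) : G.Adj (g i) (g (i + 1)) := by
    rw [hgdef, Function.update_of_ne (by omega)]
    rcases (show i + 1 < n ∨ i + 1 = n by omega) with h | h
    · rw [Function.update_of_ne h.ne]
      exact hu i hi
    · rw [h, Function.update_self, show i = n - 1 by omega]
      exact hux
  have hxz_type : tdist G.Adj x z = (1, n) := by
    simpa [hg0, hgn] using
      PureArc.tdist_closing_of_first (by omega) hg (by rwa [hgn, hg0]) (by rwa [hg0, hg1])
  have hP := G.p_ne_zero_of_tdist_eq hxy hyz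
  rw [hxz_type] at hP
  exact hP (p_one_eq_zero hls (by omega) n)

theorem tdist_eq_two_of_p_ne_zero (hls : LocallySemicomplete G.Adj) {n : ℕ} (hn : 3 ≤ n)
    (hP : G.p (1, n) (1, n + 1) (1, n + 1) ≠ 0) (hpure : TypePure G.Adj (n + 1)) {x y z : V}
    (hxy : tdist G.Adj x y = (1, n + 1)) (hyz : tdist G.Adj y z = (1, n)) :
    tdist G.Adj x z = (2, n) := by
  obtain ⟨hxy1, hyx⟩ := tdist_eq_iff.mp hxy
  obtain ⟨hyz1, hzy⟩ := tdist_eq_iff.mp hyz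
  have axy := G.adj_of_ddist_eq_one hxy1
  have ayz := G.adj_of_ddist_eq_one hyz1
  have hzx_ge : n ≤ ddist G.Adj z x := by
    have := G.ddist_triangle y z x
    omega
  obtain ⟨u, hu0, hun, hu⟩ := (hzy ▸ G.hasWalk_ddist z y).exists_path
  have hzu : tdist G.Adj z (u 1) = (1, n) := hu0 ▸
    PureArc.tdist_first_of_closing (by omega) hu (by rwa [hun, hu0])
      (by rw [hun, hu0]; exact hpure y z (by simpa using hyz))
  have hux := G.adj_penultimate_of_p_ne_zero hls hn hP axy ayz hzx_ge hu0 hun hu hzu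
  have hnxz := not_adj_of_pureArc hls (by omega) hxy hyz hu0 hu hux
    (hpure z (u 1) (by simpa using hzu))
  have hzx : ddist G.Adj z x = n := by
    have hwalk : HasWalk G.Adj (n - 1) z (u (n - 1)) := by
      simpa [hu0] using hasWalk_of_path hu (i := 0) (k := n - 1) (by omega)
    have := ddist_le (hwalk.append (hasWalk_one hux))
    omega
  have hxz : ddist G.Adj x z = 2 := by
    have hle := ddist_le (n := 2) ⟨y, axy, hasWalk_one ayz⟩
    have hne0 : ddist G.Adj x z ≠ 0 := fun h => by
      rw [G.eq_of_ddist_eq_zero h, ddist_self] at hzx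
      omega
    have hne1 : ddist G.Adj x z ≠ 1 := fun h => hnxz (G.adj_of_ddist_eq_one h)
    omega
  exact tdist_eq_iff.mpr ⟨hxz, hzx⟩

end WDRDigraph

theorem statement16_general (G : WDRDigraph V)
    (hls : LocallySemicomplete G.Adj)
    (q : ℕ) (hq : 5 ≤ q)
    (hC : G.p (1, q - 2) (1, q - 1) (1, q - 1) ≠ 0 ∧ TypePure G.Adj (q - 1)) :
    ∀ x y z : V, tdist G.Adj x y = (1, q - 1) → tdist G.Adj y z = (1, q - 2) →
      tdist G.Adj x z = (2, q - 2) := by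
  obtain ⟨n, rfl⟩ : ∃ n, q = n + 2 := ⟨q - 2, by omega⟩
  exact fun x y z => G.tdist_eq_two_of_p_ne_zero hls (by omega) hC.1 hC.2

/-- in a locally semicomplete commutative weakly distance-regular digraph, if
`q ≥ 5`, `q ∈ T`, and C(q) exists (i.e. `p^{(1,q-2)}_{(1,q-1),(1,q-1)} ≠ 0` and `(1,q-2)` is
pure), then `Γ_{1,q-1}Γ_{1,q-2} = {Γ_{2,q-2}}`. -/
theorem statement16 [Nonempty V] (G : WDRDigraph V)
    (hls : LocallySemicomplete G.Adj) (hcomm : G.Commutative)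
    (q : ℕ) (hq : 5 ≤ q)
    (hqT : ((1, q - 1) : ℕ × ℕ) ∈ tset G.Adj)
    (hC : G.p (1, q - 2) (1, q - 1) (1, q - 1) ≠ 0 ∧ TypePure G.Adj (q - 1)) :
    ∀ x y z : V, tdist G.Adj x y = (1, q - 1) → tdist G.Adj y z = (1, q - 2) →
      tdist G.Adj x z = (2, q - 2) :=
  statement16_general G hls q hq hC
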